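/- arXiv:2406.06568 — 2 statements merged into one kernel-verified Lean document; each statement's English description precedes it below -/
import Mathlib

section
/- For every r > 0, the modified Bessel function of the second kind K₀ satisfies √π e^{−r}/√(2(r + 1/4)) < K₀(r) < √π e^{−r}/√(2r). -/
/-!
Substituting `u = 2 sinh (t / 2)`, for which `cosh t = 1 + u² / 2` and `du = cosh (t / 2) dt`,
turns `∫₀^∞ cosh (t / 2) e^{-a cosh t} dt` into a Gaussian integral, equal to
`√π e^{-a} / √(2a)`. The upper bound follows from `1 < cosh (t / 2)`, the lower bound (with
`a = r + 1/4`) from `cosh (t / 2) < e^{sinh² (t / 2) / 2} = e^{(cosh t - 1) / 4}`, which is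
`1 + y < e^y` for `y = sinh² (t / 2)`.
-/

open MeasureTheory

noncomputable def K0 (r : ℝ) : ℝ := ∫ t in Set.Ioi (0 : ℝ), Real.exp (-(r * Real.cosh t))

open Set Real

theorem setIntegral_lt_setIntegral_of_forall_lt {X : Type*} [MeasurableSpace X] {μ : Measure X}
    {s : Set X} {f g : X → ℝ} (hs : MeasurableSet s) (hμs : μ s ≠ 0)
    (hf : IntegrableOn f s μ) (hg : IntegrableOn g s μ) (hlt : ∀ x ∈ s, f x < g x) :
    ∫ x in s, f x ∂μ < ∫ x in s, g x ∂μ := by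
  rw [← sub_pos, ← integral_sub hg hf, setIntegral_pos_iff_support_of_nonneg_ae
    ((ae_restrict_iff' hs).2 (ae_of_all _ fun x hx => sub_nonneg.2 (hlt x hx).le)) (hg.sub hf)]
  exact (pos_iff_ne_zero.2 hμs).trans_le
    (measure_mono fun x hx => ⟨sub_ne_zero.2 (hlt x hx).ne', hx⟩)

namespace Real

theorem cosh_eq_one_add_two_mul_sinh_half_sq (t : ℝ) : cosh t = 1 + 2 * sinh (t / 2) ^ 2 := by
  have h := cosh_two_mul (t / 2)
  rw [mul_div_cancel₀ t two_ne_zero, cosh_sq] at h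
  linarith

theorem cosh_lt_exp_sinh_sq_div_two {x : ℝ} (hx : x ≠ 0) : cosh x < exp (sinh x ^ 2 / 2) := by
  refine lt_of_pow_lt_pow_left₀ 2 (exp_nonneg _) ?_
  rw [← exp_nat_mul, cosh_sq, Nat.cast_ofNat, mul_div_cancel₀ _ two_ne_zero]
  exact add_one_lt_exp (pow_ne_zero 2 (sinh_ne_zero.2 hx))

theorem hasDerivAt_two_mul_sinh_half (t : ℝ) :
    HasDerivAt (fun t => 2 * sinh (t / 2)) (cosh (t / 2)) t :=
  (((hasDerivAt_id' t).div_const 2).sinh.const_mul 2).congr_deriv (by ring)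

theorem strictMono_two_mul_sinh_half : StrictMono fun t : ℝ => 2 * sinh (t / 2) :=
  fun _ _ h => mul_lt_mul_of_pos_left (sinh_strictMono (div_lt_div_of_pos_right h two_pos)) two_pos

theorem image_two_mul_sinh_half_Ioi_zero : (fun t => 2 * sinh (t / 2)) '' Ioi 0 = Ioi 0 := by
  ext u
  constructor
  · rintro ⟨t, ht, rfl⟩
    simpa using strictMono_two_mul_sinh_half ht
  · intro hu
    refine ⟨2 * arsinh (u / 2), ?_, ?_⟩
    · simpa using arsinh_pos_iff.2 (half_pos hu)
    · simp [mul_div_cancel_left₀ _ (two_ne_zero' ℝ), mul_div_cancel₀ u (two_ne_zero' ℝ)]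

end Real

section SinhSubstitution

variable {E : Type*} [NormedAddCommGroup E] [NormedSpace ℝ E]

theorem integrableOn_cosh_half_smul_comp_two_mul_sinh_half_iff {g : ℝ → E} :
    IntegrableOn (fun t => cosh (t / 2) • g (2 * sinh (t / 2))) (Ioi 0) ↔
      IntegrableOn g (Ioi 0) := by
  have h := integrableOn_image_iff_integrableOn_abs_deriv_smul (measurableSet_Ioi (a := 0))
    (fun t _ => (hasDerivAt_two_mul_sinh_half t).hasDerivWithinAt)
    strictMono_two_mul_sinh_half.injective.injOn g
  simpa only [image_two_mul_sinh_half_Ioi_zero, abs_of_pos (cosh_pos _)] using h.symm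

theorem integral_cosh_half_smul_comp_two_mul_sinh_half (g : ℝ → E) :
    ∫ t in Ioi 0, cosh (t / 2) • g (2 * sinh (t / 2)) = ∫ u in Ioi 0, g u := by
  have h := integral_image_eq_integral_abs_deriv_smul (measurableSet_Ioi (a := 0))
    (fun t _ => (hasDerivAt_two_mul_sinh_half t).hasDerivWithinAt)
    strictMono_two_mul_sinh_half.injective.injOn g
  simpa only [image_two_mul_sinh_half_Ioi_zero, abs_of_pos (cosh_pos _)] using h.symm

end SinhSubstitution

theorem exp_neg_mul_cosh_eq_mul_exp_neg_mul_two_mul_sinh_half_sq (a t : ℝ) :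
    exp (-(a * cosh t)) = exp (-a) * exp (-(a / 2) * (2 * sinh (t / 2)) ^ 2) := by
  rw [← exp_add, cosh_eq_one_add_two_mul_sinh_half_sq]
  ring_nf

theorem integrableOn_cosh_half_mul_exp_neg_mul_cosh {a : ℝ} (ha : 0 < a) :
    IntegrableOn (fun t => cosh (t / 2) * exp (-(a * cosh t))) (Ioi 0) := by
  simp_rw [exp_neg_mul_cosh_eq_mul_exp_neg_mul_two_mul_sinh_half_sq a]
  exact (integrableOn_cosh_half_smul_comp_two_mul_sinh_half_iff
    (g := fun u => exp (-a) * exp (-(a / 2) * u ^ 2))).2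
    ((integrable_exp_neg_mul_sq (half_pos ha)).const_mul _).integrableOn

theorem integral_cosh_half_mul_exp_neg_mul_cosh {a : ℝ} (ha : 0 < a) :
    ∫ t in Ioi 0, cosh (t / 2) * exp (-(a * cosh t)) = √π * exp (-a) / √(2 * a) := by
  have h := integral_cosh_half_smul_comp_two_mul_sinh_half
    fun u => exp (-a) * exp (-(a / 2) * u ^ 2)
  simp only [smul_eq_mul, ← exp_neg_mul_cosh_eq_mul_exp_neg_mul_two_mul_sinh_half_sq] at h
  rw [h, integral_const_mul, integral_gaussian_Ioi,
    sqrt_div pi_pos.le, show 2 * a = 2 ^ 2 * (a / 2) by ring, sqrt_mul (by positivity),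
    sqrt_sq zero_le_two]
  field_simp

theorem integrableOn_exp_neg_mul_cosh {a : ℝ} (ha : 0 < a) :
    IntegrableOn (fun t => exp (-(a * cosh t))) (Ioi 0) :=
  (integrableOn_cosh_half_mul_exp_neg_mul_cosh ha).mono'
    (by fun_prop : Continuous fun t => exp (-(a * cosh t))).aestronglyMeasurable
    (ae_of_all _ fun t => by
      rw [norm_of_nonneg (exp_pos _).le]
      exact le_mul_of_one_le_left (exp_pos _).le (one_le_cosh _))

theorem exp_quarter_mul_cosh_half_mul_exp_lt (b : ℝ) {t : ℝ} (ht : t ≠ 0) :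
    exp (1 / 4) * (cosh (t / 2) * exp (-((b + 1 / 4) * cosh t))) < exp (-(b * cosh t)) := by
  have hexp : exp (1 / 4) * exp (sinh (t / 2) ^ 2 / 2) * exp (-((b + 1 / 4) * cosh t)) =
      exp (-(b * cosh t)) := by
    rw [← exp_add, ← exp_add, cosh_eq_one_add_two_mul_sinh_half_sq]
    ring_nf
  calc exp (1 / 4) * (cosh (t / 2) * exp (-((b + 1 / 4) * cosh t)))
      < exp (1 / 4) * (exp (sinh (t / 2) ^ 2 / 2) * exp (-((b + 1 / 4) * cosh t))) := by
        gcongr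
        exact cosh_lt_exp_sinh_sq_div_two (div_ne_zero ht two_ne_zero)
    _ = exp (-(b * cosh t)) := by rw [← hexp, mul_assoc]

/-- For every `r > 0`, `√π e^{−r}/√(2(r + 1/4)) < K₀(r) < √π e^{−r}/√(2r)`. -/
theorem stmt7 (r : ℝ) (hr : 0 < r) :
    Real.sqrt Real.pi * Real.exp (-r) / Real.sqrt (2 * (r + 1 / 4)) < K0 r ∧
      K0 r < Real.sqrt Real.pi * Real.exp (-r) / Real.sqrt (2 * r) := by
  have hr' : 0 < r + 1 / 4 := by positivity
  have hvol : volume (Ioi (0 : ℝ)) ≠ 0 := by simp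
  constructor
  · calc √π * exp (-r) / √(2 * (r + 1 / 4))
        = ∫ t in Ioi 0, exp (1 / 4) * (cosh (t / 2) * exp (-((r + 1 / 4) * cosh t))) := by
          rw [integral_const_mul, integral_cosh_half_mul_exp_neg_mul_cosh hr',
            show exp (-r) = exp (1 / 4) * exp (-(r + 1 / 4)) by rw [← exp_add]; ring_nf]
          ring
      _ < K0 r := setIntegral_lt_setIntegral_of_forall_lt measurableSet_Ioi hvol
          ((integrableOn_cosh_half_mul_exp_neg_mul_cosh hr').const_mul _)
          (integrableOn_exp_neg_mul_cosh hr)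
          fun t ht => exp_quarter_mul_cosh_half_mul_exp_lt r ht.ne'
  · calc K0 r < ∫ t in Ioi 0, cosh (t / 2) * exp (-(r * cosh t)) :=
          setIntegral_lt_setIntegral_of_forall_lt measurableSet_Ioi hvol
            (integrableOn_exp_neg_mul_cosh hr) (integrableOn_cosh_half_mul_exp_neg_mul_cosh hr)
            fun t ht => lt_mul_of_one_lt_left (exp_pos _) (one_lt_cosh.2 (half_pos ht).ne')
      _ = √π * exp (-r) / √(2 * r) := integral_cosh_half_mul_exp_neg_mul_cosh hr
end

section
/- Let T be a self-adjoint invertible linear operator on a Hilbert space H with exactly n negative eigenvalues λ₁ < λ₂ < ⋯ < λₙ < 0, each with one-dimensional eigenspace spanned by normalized eigenfunctions e₁,…,eₙ. Let f₁,…,fₙ ∈ H with (fᵢ, eᵢ) ≠ 0 for each i. Define the n×n matrix M with entries m_{ij} = (T⁻¹fᵢ, fⱼ) for i ≠ j, and m_{ii} = (T⁻¹fᵢ, fᵢ) − Σ_{j≠i} (1/λⱼ)(fᵢ, eⱼ)². If M is negative definite, then for every u ∈ H with (u, f₁) = ⋯ = (u, fₙ) = 0 and u ≠ 0, one has (Tu,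 u) > 0. -/
/-!
Suppose `⟪T u, u⟫ ≤ 0`. Some nontrivial combination `x = a • u + ∑ cᵢ • T⁻¹ fᵢ` is orthogonal
to the `n` eigenfunctions, so `0 ≤ ⟪T x, x⟫ = a² ⟪T u, u⟫ + cᵀ G c` with `Gᵢⱼ = ⟪T⁻¹ fᵢ, fⱼ⟫`,
the cross term vanishing because `u ⊥ fᵢ`. Now `G = M + diag d` with
`dᵢ = ∑_{j ≠ i} λⱼ⁻¹ ⟪fᵢ, eⱼ⟫² ≤ 0`, so `G` is negative definite, forcing `c = 0`. Then `u`
itself is orthogonal to the eigenfunctions and `⟪T u, u⟫ = 0`, so `u` minimises the nonnegative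
form on `span{eᵢ}ᗮ`; hence `T u ⊥ span{eᵢ}ᗮ`, while `T u ⊥ span{eᵢ}` by invariance, so
`T u = 0`, contradicting invertibility.
-/

open scoped RealInnerProductSpace

open Matrix Submodule

section

variable {H : Type*} [NormedAddCommGroup H] [InnerProductSpace ℝ H]

lemma mem_orthogonal_span_range_iff {ι : Type*} (e : ι → H) (w : H) :
    w ∈ (span ℝ (Set.range e))ᗮ ↔ ∀ i, ⟪w, e i⟫ = 0 := by
  refine ⟨fun hw i => inner_left_of_mem_orthogonal (subset_span (Set.mem_range_self i)) hw,
    fun h => (mem_orthogonal' _ _).mpr fun x hx => ?_⟩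
  induction hx using span_induction with
  | mem x hx => obtain ⟨i, rfl⟩ := hx; exact h i
  | zero => exact inner_zero_right w
  | add x y _ _ hx hy => rw [inner_add_right, hx, hy, add_zero]
  | smul a x _ hx => rw [real_inner_smul_right, hx, mul_zero]

lemma exists_ne_zero_inner_sum_smul_eq_zero {ι κ : Type*} [Fintype ι] [Fintype κ]
    (v : ι → H) (e : κ → H) (h : Fintype.card κ < Fintype.card ι) :
    ∃ c : ι → ℝ, c ≠ 0 ∧ ∀ k, ⟪∑ i, c i • v i, e k⟫ = 0 := by
  have hdep : ¬LinearIndependent ℝ (fun i k => ⟪v i, e k⟫ : ι → κ → ℝ) := fun hli =>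
    (hli.fintype_card_le_finrank.trans_eq (Module.finrank_fintype_fun_eq_card ℝ)).not_gt h
  obtain ⟨c, hc, i, hi⟩ := Fintype.not_linearIndependent_iff.mp hdep
  refine ⟨c, fun h0 => hi (congrFun h0 i), fun k => ?_⟩
  simpa [sum_inner, real_inner_smul_left] using congrFun hc k

lemma exists_inner_smul_add_sum_smul_eq_zero {n : ℕ} (u : H) (g e : Fin n → H) :
    ∃ (a : ℝ) (c : Fin n → ℝ), (a ≠ 0 ∨ c ≠ 0) ∧ ∀ k, ⟪a • u + ∑ i, c i • g i, e k⟫ = 0 := by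
  obtain ⟨c, hc, he⟩ :=
    exists_ne_zero_inner_sum_smul_eq_zero (Fin.cons u g : Fin (n + 1) → H) e (by simp)
  refine ⟨c 0, Fin.tail c, ?_, fun k => by simpa [Fin.sum_univ_succ, Fin.tail] using he k⟩
  by_contra! h
  apply hc
  rw [← Fin.cons_self_tail c, h.1, h.2]
  ext i
  refine Fin.cases ?_ (fun _ => ?_) i <;> simp

lemma dotProduct_mulVec_of_inner {ι : Type*} [Fintype ι] (x y : ι → H) (c d : ι → ℝ) :
    c ⬝ᵥ (Matrix.of fun i j => ⟪x i, y j⟫) *ᵥ d = ⟪∑ i, c i • x i, ∑ j, d j • y j⟫ := by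
  simp_rw [dotProduct, mulVec, dotProduct, of_apply, sum_inner, inner_sum, real_inner_smul_left,
    real_inner_smul_right, Finset.mul_sum]
  exact Finset.sum_congr rfl fun i _ => Finset.sum_congr rfl fun j _ => by ring

lemma inner_sum_smul_sum_smul_neg {ι : Type*} [Fintype ι] [DecidableEq ι] (x y : ι → H)
    {d : ι → ℝ} (hd : ∀ i, d i ≤ 0) {M : Matrix ι ι ℝ}
    (hM : ∀ i j, M i j = if i = j then ⟪x i, y i⟫ - d i else ⟪x i, y j⟫) (hMneg : (-M).PosDef)
    {c : ι → ℝ} (hc : c ≠ 0) : ⟪∑ i, c i • x i, ∑ j, c j • y j⟫ < 0 := by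
  have hG : (Matrix.of fun i j => ⟪x i, y j⟫) = M + diagonal d := by
    ext i j
    rw [of_apply, Matrix.add_apply, hM]
    by_cases h : i = j
    · subst h; simp
    · simp [h]
  have hGneg : (-Matrix.of fun i j => ⟪x i, y j⟫).PosDef := by
    rw [hG, neg_add, diagonal_neg]
    exact hMneg.add_posSemidef (posSemidef_diagonal_iff.mpr fun i => neg_nonneg.mpr (hd i))
  have := hGneg.dotProduct_mulVec_pos hc
  rw [neg_mulVec, dotProduct_neg, star_trivial, dotProduct_mulVec_of_inner] at this
  linarith

lemma span_range_le_comap_of_apply_eq_smul {ι : Type*} {T : H →ₗ[ℝ] H} {e : ι → H}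
    {lam : ι → ℝ} (heig : ∀ i, T (e i) = lam i • e i) :
    span ℝ (Set.range e) ≤ (span ℝ (Set.range e)).comap T := by
  rw [span_le]
  rintro _ ⟨i, rfl⟩
  rw [SetLike.mem_coe, mem_comap, heig i]
  exact smul_mem _ _ (subset_span (Set.mem_range_self i))

namespace LinearMap.IsSymmetric

variable {T : H →ₗ[ℝ] H}

lemma inner_map_smul_add_self (hT : T.IsSymmetric) (a : ℝ) (x y : H) :
    ⟪T (a • x + y), a • x + y⟫ = a ^ 2 * ⟪T x, x⟫ + 2 * a * ⟪T x, y⟫ + ⟪T y, y⟫ := by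
  have hyx : ⟪T y, x⟫ = ⟪T x, y⟫ := by rw [hT, real_inner_comm]
  simp only [map_add, map_smul, inner_add_left, inner_add_right, real_inner_smul_left,
    real_inner_smul_right, hyx]
  ring

lemma inner_map_eq_zero_of_inner_map_self_eq_zero (hT : T.IsSymmetric) {V : Submodule ℝ H}
    (hV : ∀ w ∈ V, 0 ≤ ⟪T w, w⟫) {u : H} (hu : u ∈ V) (hu0 : ⟪T u, u⟫ = 0) {w : H}
    (hw : w ∈ V) : ⟪T u, w⟫ = 0 := by
  have hwu : ⟪T w, u⟫ = ⟪T u, w⟫ := by rw [hT, real_inner_comm]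
  have hdisc := discrim_le_zero (a := ⟪T w, w⟫) (b := 2 * ⟪T u, w⟫) (c := 0) fun t => by
    have := hV _ (V.add_mem (V.smul_mem t hw) hu)
    rw [hT.inner_map_smul_add_self, hwu, hu0] at this
    linarith
  rw [discrim] at hdisc
  nlinarith [sq_nonneg ⟪T u, w⟫]

lemma map_eq_zero_of_inner_map_self_eq_zero (hT : T.IsSymmetric) {K : Submodule ℝ H}
    [K.HasOrthogonalProjection] (hK : K ≤ K.comap T) (hpos : ∀ w ∈ Kᗮ, 0 ≤ ⟪T w, w⟫) {u : H}
    (hu : u ∈ Kᗮ) (hu0 : ⟪T u, u⟫ = 0) : T u = 0 := by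
  have hmem : T u ∈ K := by
    rw [← K.orthogonal_orthogonal, mem_orthogonal']
    exact fun w hw => hT.inner_map_eq_zero_of_inner_map_self_eq_zero hpos hu hu0 hw
  have horth : T u ∈ Kᗮ := by
    rw [mem_orthogonal']
    intro k hk
    rw [hT]
    have hTk : T k ∈ K := hK hk
    exact inner_left_of_mem_orthogonal hTk hu
  exact disjoint_def.mp K.orthogonal_disjoint _ hmem horth

end LinearMap.IsSymmetric

end

theorem stmt8_general {H : Type*} [NormedAddCommGroup H] [InnerProductSpace ℝ H]
    (n : ℕ) (T : H ≃L[ℝ] H)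
    (hsa : ∀ x y : H, ⟪(T : H →L[ℝ] H) x, y⟫ = ⟪x, (T : H →L[ℝ] H) y⟫)
    (lam : Fin n → ℝ) (e : Fin n → H)
    (hlamneg : ∀ i, lam i < 0)
    (heig : ∀ i, (T : H →L[ℝ] H) (e i) = lam i • e i)
    (hcoer : ∀ w : H, (∀ i, ⟪w, e i⟫ = 0) → 0 ≤ ⟪(T : H →L[ℝ] H) w, w⟫)
    (f : Fin n → H)
    (M : Matrix (Fin n) (Fin n) ℝ)
    (hM : ∀ i j, M i j = if i = j then
        ⟪T.symm (f i), f i⟫ -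
          ∑ k ∈ Finset.univ.erase i, (1 / lam k) * ⟪f i, e k⟫ ^ 2
      else ⟪T.symm (f i), f j⟫)
    (hMnegdef : (-M).PosDef)
    (u : H) (hu : u ≠ 0) (horth : ∀ i, ⟪u, f i⟫ = 0) :
    0 < ⟪(T : H →L[ℝ] H) u, u⟫ := by
  set A : H →ₗ[ℝ] H := ((T : H →L[ℝ] H) : H →ₗ[ℝ] H)
  have hA : A.IsSymmetric := hsa
  set K := span ℝ (Set.range e)
  have : FiniteDimensional ℝ K := FiniteDimensional.span_of_finite ℝ (Set.finite_range e)
  have hKinv : K ≤ K.comap A := span_range_le_comap_of_apply_eq_smul heig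
  have hApos : ∀ w ∈ Kᗮ, 0 ≤ ⟪A w, w⟫ :=
    fun w hw => hcoer w ((mem_orthogonal_span_range_iff e w).mp hw)
  change 0 < ⟪A u, u⟫
  by_contra! hneg
  obtain ⟨a, c, hac, hperp⟩ := exists_inner_smul_add_sum_smul_eq_zero u (fun i => T.symm (f i)) e
  set y := ∑ i, c i • T.symm (f i)
  have hAy : A y = ∑ i, c i • f i := by simp [y, A]
  have hcross : ⟪A u, y⟫ = 0 := by
    rw [hA, hAy, inner_sum]
    simp [real_inner_smul_right, horth]
  have hx : 0 ≤ ⟪A (a • u + y), a • u + y⟫ := hcoer _ hperp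
  rw [hA.inner_map_smul_add_self, hcross, hA y, hAy] at hx
  have hc : c = 0 := by
    by_contra hc
    have hy : ⟪y, ∑ i, c i • f i⟫ < 0 := inner_sum_smul_sum_smul_neg _ _
      (fun i => Finset.sum_nonpos fun k _ =>
        mul_nonpos_of_nonpos_of_nonneg (one_div_neg.mpr (hlamneg k)).le (sq_nonneg _))
      hM hMnegdef hc
    nlinarith [sq_nonneg a]
  have ha : a ≠ 0 := hac.resolve_right (not_not.mpr hc)
  have huK : u ∈ Kᗮ := (mem_orthogonal_span_range_iff e u).mpr fun k => by
    simpa [y, hc, real_inner_smul_left, ha] using hperp k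
  have hAu : A u = 0 :=
    hA.map_eq_zero_of_inner_map_self_eq_zero hKinv hApos huK (le_antisymm hneg (hApos u huK))
  exact hu (T.injective (by simpa [A] using hAu))

/-- Generalized Weinstein coercivity lemma. Let `T` be a self-adjoint invertible linear
operator on a real Hilbert space `H` with exactly `n` negative eigenvalues
`λ₁ < ⋯ < λₙ < 0`, each simple, with normalized eigenfunctions `e₁, …, eₙ`, and with the
quadratic form `(Tw, w)` nonnegative on the orthogonal complement of `span{e₁, …, eₙ}`.
Let `f₁, …, fₙ ∈ H` with `(fᵢ, eᵢ) ≠ 0`. Define the matrix `M` by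
`m_{ij} = (T⁻¹fᵢ, fⱼ)` for `i ≠ j` and
`m_{ii} = (T⁻¹fᵢ, fᵢ) − Σ_{j≠i} (1/λⱼ)(fᵢ, eⱼ)²`. If `M` is negative definite, then
any nonzero `u` with `(u, f₁) = ⋯ = (u, fₙ) = 0` satisfies `(Tu, u) > 0`. -/
theorem stmt8 {H : Type*} [NormedAddCommGroup H] [InnerProductSpace ℝ H] [CompleteSpace H]
    (n : ℕ) (T : H ≃L[ℝ] H)
    (hsa : ∀ x y : H, ⟪(T : H →L[ℝ] H) x, y⟫ = ⟪x, (T : H →L[ℝ] H) y⟫)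
    (lam : Fin n → ℝ) (e : Fin n → H)
    (hlamneg : ∀ i, lam i < 0) (hlammono : StrictMono lam)
    (hnorm : ∀ i, ‖e i‖ = 1)
    (heig : ∀ i, (T : H →L[ℝ] H) (e i) = lam i • e i)
    (hcoer : ∀ w : H, (∀ i, ⟪w, e i⟫ = 0) → 0 ≤ ⟪(T : H →L[ℝ] H) w, w⟫)
    (f : Fin n → H) (hf : ∀ i, ⟪f i, e i⟫ ≠ 0)
    (M : Matrix (Fin n) (Fin n) ℝ)
    (hM : ∀ i j, M i j = if i = j then
        ⟪T.symm (f i), f i⟫ -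
          ∑ k ∈ Finset.univ.erase i, (1 / lam k) * ⟪f i, e k⟫ ^ 2
      else ⟪T.symm (f i), f j⟫)
    (hMnegdef : (-M).PosDef)
    (u : H) (hu : u ≠ 0) (horth : ∀ i, ⟪u, f i⟫ = 0) :
    0 < ⟪(T : H →L[ℝ] H) u, u⟫ :=
  stmt8_general n T hsa lam e hlamneg heig hcoer f M hM hMnegdef u hu horth
end
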